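/- Assume the system is q-eigenvalue observable with s ≤ q ≤ 2s, and the data Y_1,…,Y_p are generated under at most s attacks from some x_true. Define M = { x_1 + ⋯ + x_r : x_j ∈ X_j for every j, and |I_1(x_1) ∪ ⋯ ∪ I_r(x_r)| ≤ s }. Then M equals the set of plausible states, i.e., M = { x ∈ ℝ^n : ∃Γ ⊆ {1,…,p}, |Γ| = p − s, 𝒪_i x = Y_i for all i ∈ Γ }. (Proposition 1: correctness of the extended decomposition-based SSR algorithm.) -/

import Mathlib

open Matrix

noncomputable section

/-- Generalized eigenspace of `A` for the eigenvalue `μ`: `ker((A - μ I)^n)`. -/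
def genEig {n : ℕ} (A : Matrix (Fin n) (Fin n) ℝ) (μ : ℝ) : Set (Fin n → ℝ) :=
  {x | ((A - μ • 1) ^ n).mulVec x = 0}

/-- Observability map of sensor `i` over horizon `t`: `(𝒪_i x)_τ = C_i A^τ x`. -/
def obsMap {n p : ℕ} (t : ℕ) (A : Matrix (Fin n) (Fin n) ℝ)
    (C : Matrix (Fin p) (Fin n) ℝ) (i : Fin p) (x : Fin n → ℝ) : Fin (t + 1) → ℝ :=
  fun τ => ((C * A ^ (τ : ℕ)).mulVec x) i

/-- `x` is a plausible state for the data `Y`: some set `Γ` of `p - s` sensors is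
exactly explained by `x`. -/
def plausible {n p : ℕ} (t : ℕ) (A : Matrix (Fin n) (Fin n) ℝ)
    (C : Matrix (Fin p) (Fin n) ℝ) (s : ℕ) (Y : Fin p → Fin (t + 1) → ℝ)
    (x : Fin n → ℝ) : Prop :=
  ∃ Γ : Finset (Fin p), Γ.card = p - s ∧ ∀ i ∈ Γ, obsMap t A C i x = Y i

/-- The eigenvalue `μ` of `A` is observable with respect to sensor `i` (over `ℂ`). -/
def eigObs {n p : ℕ} (A : Matrix (Fin n) (Fin n) ℝ)
    (C : Matrix (Fin p) (Fin n) ℝ) (μ : ℝ) (i : Fin p) : Prop :=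
  ∀ v : Fin n → ℂ, (A.map Complex.ofReal).mulVec v = (μ : ℂ) • v →
    ((C.map Complex.ofReal).mulVec v) i = 0 → v = 0

/-- The substate `xj ∈ V^j` agrees with sensor `i`: some choice of substates in the
other generalized eigenspaces makes the total response match the data `Y i`. -/
def agrees {n p r : ℕ} (t : ℕ) (A : Matrix (Fin n) (Fin n) ℝ)
    (C : Matrix (Fin p) (Fin n) ℝ) (lam : Fin r → ℝ)
    (Y : Fin p → Fin (t + 1) → ℝ) (j : Fin r) (xj : Fin n → ℝ) (i : Fin p) : Prop :=
  ∃ z : Fin r → Fin n → ℝ, (∀ k, k ≠ j → z k ∈ genEig A (lam k)) ∧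
    obsMap t A C i (xj + ∑ k ∈ Finset.univ.erase j, z k) = Y i

/-- `X_j`: the substates in `V^j` that agree with at least `q + 1 - s` sensors for
which `λ_j` is observable. -/
def Xset {n p r : ℕ} (t : ℕ) (A : Matrix (Fin n) (Fin n) ℝ)
    (C : Matrix (Fin p) (Fin n) ℝ) (lam : Fin r → ℝ)
    (Y : Fin p → Fin (t + 1) → ℝ) (s q : ℕ) (j : Fin r) : Set (Fin n → ℝ) :=
  {xj | xj ∈ genEig A (lam j) ∧
    q + 1 - s ≤ {i : Fin p | eigObs A C (lam j) i ∧ agrees t A C lam Y j xj i}.ncard}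

/-- `I_j(xj)`: the sensors that do not agree with the substate `xj`. -/
def Iset {n p r : ℕ} (t : ℕ) (A : Matrix (Fin n) (Fin n) ℝ)
    (C : Matrix (Fin p) (Fin n) ℝ) (lam : Fin r → ℝ)
    (Y : Fin p → Fin (t + 1) → ℝ) (j : Fin r) (xj : Fin n → ℝ) : Set (Fin p) :=
  {i | ¬ agrees t A C lam Y j xj i}


/-!
For a sensor `i`, the states that `i` never sees form an `A`-invariant subspace, the
unobservable subspace, and by Cayley–Hamilton a window of `n ≤ t + 1` samples already detects
it. An invariant subspace that contains a sum of generalized eigenvectors for distinct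
eigenvalues contains each of them. Hence two decompositions `∑ x_k` that both explain the
data of sensor `i` give, component by component, the same response at `i`; so if every `x_j` agrees with every sensor
outside `⋃ I_j(x_j)`, then `∑ x_j` explains all of these at least `p - s` sensors.
Conversely, the eigencomponents `P_j x` of a plausible state agree with every sensor of its
`Γ`, which has at most `s` sensors outside it; this gives both cardinality bounds.
-/

namespace Module.End

section CommRing

variable {R V W : Type*} [CommRing R] [AddCommGroup V] [Module R V] [AddCommGroup W] [Module R W]

def unobservableSubspace (f : Module.End R V) (φ : V →ₗ[R] W) : Submodule R V :=
  ⨅ m : ℕ, LinearMap.ker (φ ∘ₗ f ^ m)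

variable {f : Module.End R V} {φ : V →ₗ[R] W} {x : V}

theorem mem_unobservableSubspace :
    x ∈ f.unobservableSubspace φ ↔ ∀ m : ℕ, φ ((f ^ m) x) = 0 := by
  simp [unobservableSubspace]

theorem map_mem_unobservableSubspace (hx : x ∈ f.unobservableSubspace φ) :
    f x ∈ f.unobservableSubspace φ := by
  rw [mem_unobservableSubspace] at hx ⊢
  intro m
  simpa [pow_succ] using hx (m + 1)

-- Cayley–Hamilton: every power of `f` is a combination of the powers below `finrank`.
open Polynomial in
theorem mem_unobservableSubspace_of_forall_lt_finrank [Nontrivial R] [Module.Free R V]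
    [Module.Finite R V] (h : ∀ m < Module.finrank R V, φ ((f ^ m) x) = 0) :
    x ∈ f.unobservableSubspace φ := by
  rw [mem_unobservableSubspace]
  intro m
  by_cases h1 : f.charpoly = 1
  · have : (1 : Module.End R V) = 0 := by simpa [h1] using LinearMap.aeval_self_charpoly f
    rw [← mul_one (f ^ m), this, mul_zero, LinearMap.zero_apply, map_zero]
  · have hdeg : (X ^ m %ₘ f.charpoly).natDegree < Module.finrank R V :=
      LinearMap.charpoly_natDegree f ▸ natDegree_modByMonic_lt _ (LinearMap.charpoly_monic f) h1
    rw [LinearMap.pow_eq_aeval_mod_charpoly, aeval_eq_sum_range' hdeg]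
    simp only [LinearMap.coe_sum, Finset.sum_apply, LinearMap.smul_apply, map_sum, map_smul]
    exact Finset.sum_eq_zero fun k hk => by rw [h k (Finset.mem_range.mp hk), smul_zero]

end CommRing

section Field

variable {K V W : Type*} [Field K] [AddCommGroup V] [Module K V] [AddCommGroup W] [Module K W]

theorem apply_mem_genEigenspace_of_comp_eq {f : Module.End K V} {g : Module.End K W}
    (π : V →ₗ[K] W) (h : π ∘ₗ f = g ∘ₗ π) {μ : K} {k : ℕ∞} {x : V}
    (hx : x ∈ f.genEigenspace μ k) : π x ∈ g.genEigenspace μ k := by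
  have hsemi : Function.Semiconj π ⇑(f - μ • 1) ⇑(g - μ • 1) := fun y => by
    simpa using congr($h y)
  obtain ⟨l, hl, hxl⟩ := mem_genEigenspace.mp hx
  refine mem_genEigenspace.mpr ⟨l, hl, ?_⟩
  rw [LinearMap.mem_ker, Module.End.coe_pow] at hxl ⊢
  rw [← hsemi.iterate_right l x, hxl, map_zero]

theorem mem_of_sum_mem_of_mem_genEigenspace {f : Module.End K V} {p : Submodule K V}
    (hp : ∀ x ∈ p, f x ∈ p) {ι : Type*} [Fintype ι] {μ : ι → K} (hμ : Function.Injective μ)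
    {k : ℕ∞} {w : ι → V} (hw : ∀ i, w i ∈ f.genEigenspace (μ i) k) (hsum : ∑ i, w i ∈ p)
    (i : ι) : w i ∈ p := by
  -- In `V ⧸ p` the images of the `w i` are generalized eigenvectors summing to zero.
  set g : Module.End K (V ⧸ p) := p.mapQ p f hp
  have hπ : ∀ i, p.mkQ (w i) ∈ g.genEigenspace (μ i) k := fun i =>
    apply_mem_genEigenspace_of_comp_eq p.mkQ (p.mapQ_mkQ p f (h := hp)) (hw i)
  have hsum0 : ∑ i, p.mkQ (w i) = 0 := by
    rwa [← map_sum, Submodule.mkQ_apply, Submodule.Quotient.mk_eq_zero]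
  have hind := (iSupIndep_iff_finsetSum_eq_zero_imp_eq_zero _).mp
    ((g.independent_genEigenspace k).comp hμ)
  simpa using hind Finset.univ _ (fun i _ => hπ i) hsum0 i (Finset.mem_univ i)

end Field

end Module.End

section Sensors

variable {n p r t : ℕ} {A : Matrix (Fin n) (Fin n) ℝ} {C : Matrix (Fin p) (Fin n) ℝ}
  {lam : Fin r → ℝ} {Y : Fin p → Fin (t + 1) → ℝ}

theorem mem_genEig_iff {μ : ℝ} {x : Fin n → ℝ} :
    x ∈ genEig A μ ↔ x ∈ Module.End.genEigenspace (Matrix.toLin' A) μ n := by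
  rw [Module.End.mem_genEigenspace_nat, LinearMap.mem_ker, Module.End.one_eq_id,
    ← Matrix.toLin'_one, ← map_smul, ← map_sub, ← Matrix.toLin'_pow, Matrix.toLin'_apply]
  rfl

theorem obsMap_apply (i : Fin p) (x : Fin n → ℝ) (τ : Fin (t + 1)) :
    obsMap t A C i x τ =
      (LinearMap.proj i ∘ₗ Matrix.toLin' C) ((Matrix.toLin' A ^ (τ : ℕ)) x) := by
  rw [← Matrix.toLin'_pow, LinearMap.comp_apply, Matrix.toLin'_apply, Matrix.toLin'_apply,
    Matrix.mulVec_mulVec]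
  rfl

theorem obsMap_sub (i : Fin p) (x y : Fin n → ℝ) :
    obsMap t A C i (x - y) = obsMap t A C i x - obsMap t A C i y := by
  funext τ
  simp only [obsMap_apply, map_sub, Pi.sub_apply]

theorem obsMap_sum (i : Fin p) {ι : Type*} (s : Finset ι) (x : ι → Fin n → ℝ) :
    obsMap t A C i (∑ k ∈ s, x k) = ∑ k ∈ s, obsMap t A C i (x k) := by
  funext τ
  simp only [obsMap_apply, map_sum, Finset.sum_apply]

theorem obsMap_eq_zero_iff (ht : n - 1 ≤ t) (i : Fin p) (x : Fin n → ℝ) :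
    obsMap t A C i x = 0 ↔
      x ∈ Module.End.unobservableSubspace (Matrix.toLin' A)
        (LinearMap.proj i ∘ₗ Matrix.toLin' C) := by
  simp only [funext_iff, obsMap_apply, Pi.zero_apply]
  constructor
  · intro h
    refine Module.End.mem_unobservableSubspace_of_forall_lt_finrank fun m hm => ?_
    rw [Module.finrank_fin_fun] at hm
    exact h ⟨m, by omega⟩
  · exact fun h τ => Module.End.mem_unobservableSubspace.mp h τ

theorem obsMap_eq_of_obsMap_sum_eq (ht : n - 1 ≤ t) (hlam : Function.Injective lam) (i : Fin p)
    {a b : Fin r → Fin n → ℝ} (ha : ∀ k, a k ∈ genEig A (lam k))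
    (hb : ∀ k, b k ∈ genEig A (lam k))
    (h : obsMap t A C i (∑ k, a k) = obsMap t A C i (∑ k, b k)) (j : Fin r) :
    obsMap t A C i (a j) = obsMap t A C i (b j) := by
  have hdiff : ∀ k, a k - b k ∈ Module.End.genEigenspace (Matrix.toLin' A) (lam k) n :=
    fun k => sub_mem (mem_genEig_iff.mp (ha k)) (mem_genEig_iff.mp (hb k))
  have hsum : ∑ k, (a k - b k) ∈ _ := (obsMap_eq_zero_iff ht i _).mp <| by
    rw [Finset.sum_sub_distrib, obsMap_sub, h, sub_self]
  have hj := Module.End.mem_of_sum_mem_of_mem_genEigenspace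
    (fun _ => Module.End.map_mem_unobservableSubspace) hlam hdiff hsum j
  rwa [← obsMap_eq_zero_iff ht, obsMap_sub, sub_eq_zero] at hj

-- Every `v j` can be traded for the `j`-th component of one fixed decomposition explaining `Y i`.
theorem obsMap_sum_eq_of_forall_agrees (ht : n - 1 ≤ t) (hlam : Function.Injective lam)
    {v : Fin r → Fin n → ℝ} (hv : ∀ j, v j ∈ genEig A (lam j)) (j₀ : Fin r) {i : Fin p}
    (hag : ∀ j, agrees t A C lam Y j (v j) i) : obsMap t A C i (∑ j, v j) = Y i := by
  classical
  choose z hz hzY using hag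
  set c : Fin r → Fin r → Fin n → ℝ := fun j => Function.update (z j) j (v j)
  have hc : ∀ j k, c j k ∈ genEig A (lam k) := fun j k => by
    rcases eq_or_ne k j with rfl | hkj
    · simpa [c] using hv k
    · simpa [c, hkj] using hz j k hkj
  have hcY : ∀ j, obsMap t A C i (∑ k, c j k) = Y i := fun j => by
    rw [Finset.sum_update_of_mem (Finset.mem_univ j), Finset.sdiff_singleton_eq_erase]
    exact hzY j
  calc obsMap t A C i (∑ j, v j) = ∑ j, obsMap t A C i (c j j) := by
        rw [obsMap_sum]
        simp [c]
    _ = ∑ j, obsMap t A C i (c j₀ j) := Finset.sum_congr rfl fun j _ =>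
        obsMap_eq_of_obsMap_sum_eq ht hlam i (hc j) (hc j₀) ((hcY j).trans (hcY j₀).symm) j
    _ = Y i := by rw [← obsMap_sum, hcY]

theorem agrees_of_obsMap_sum_eq {u : Fin r → Fin n → ℝ} (hu : ∀ k, u k ∈ genEig A (lam k))
    {i : Fin p} (hi : obsMap t A C i (∑ k, u k) = Y i) (j : Fin r) :
    agrees t A C lam Y j (u j) i :=
  ⟨u, fun k _ => hu k, by rwa [Finset.add_sum_erase _ _ (Finset.mem_univ j)]⟩

theorem plausible_of_forall_notMem {s : ℕ} {x : Fin n → ℝ} {U : Set (Fin p)}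
    (hU : U.ncard ≤ s) (h : ∀ i ∉ U, obsMap t A C i x = Y i) : plausible t A C s Y x := by
  classical
  have hcard : p - s ≤ (U.toFinset)ᶜ.card := by
    rw [Finset.card_compl, Fintype.card_fin, ← Set.ncard_eq_toFinset_card']
    omega
  obtain ⟨Γ, hΓU, hΓ⟩ := Finset.exists_subset_card_eq hcard
  exact ⟨Γ, hΓ, fun i hi => h i (by simpa using hΓU hi)⟩

theorem ncard_compl_le_of_card_eq {s : ℕ} {Γ : Finset (Fin p)} (hΓ : Γ.card = p - s) :
    (Γ : Set (Fin p))ᶜ.ncard ≤ s := by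
  rw [← Finset.coe_compl, Set.ncard_coe_finset, Finset.card_compl, Fintype.card_fin, hΓ]
  omega

theorem mem_Xset_of_forall_agrees {s q : ℕ} {j : Fin r} {u : Fin n → ℝ}
    (hu : u ∈ genEig A (lam j)) (hobs : q + 1 ≤ {i | eigObs A C (lam j) i}.ncard)
    {Γ : Set (Fin p)} (hΓ : Γᶜ.ncard ≤ s) (hag : ∀ i ∈ Γ, agrees t A C lam Y j u i) :
    u ∈ Xset t A C lam Y s q j := by
  refine ⟨hu, ?_⟩
  have hcover : {i | eigObs A C (lam j) i} ⊆
      {i | eigObs A C (lam j) i ∧ agrees t A C lam Y j u i} ∪ Γᶜ := fun i hi => by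
    by_cases hiΓ : i ∈ Γ
    · exact Or.inl ⟨hi, hag i hiΓ⟩
    · exact Or.inr hiΓ
  have := (Set.ncard_le_ncard hcover).trans (Set.ncard_union_le _ _)
  omega

theorem ncard_iUnion_Iset_le {s : ℕ} {u : Fin r → Fin n → ℝ} {Γ : Set (Fin p)}
    (hΓ : Γᶜ.ncard ≤ s) (hag : ∀ i ∈ Γ, ∀ j, agrees t A C lam Y j (u j) i) :
    (⋃ j, Iset t A C lam Y j (u j)).ncard ≤ s := by
  refine le_trans (Set.ncard_le_ncard fun i hi => ?_) hΓ
  obtain ⟨j, hj⟩ := Set.mem_iUnion.mp hi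
  exact fun hiΓ => hj (hag i hiΓ j)

end Sensors

theorem extended_decomposition_ssr_correct_general
    {n p r s q t : ℕ} (ht : n - 1 ≤ t)
    (A : Matrix (Fin n) (Fin n) ℝ) (C : Matrix (Fin p) (Fin n) ℝ)
    (lam : Fin r → ℝ) (hlam : Function.Injective lam)
    (P : Fin r → Matrix (Fin n) (Fin n) ℝ)
    (hPmem : ∀ j, ∀ x : Fin n → ℝ, (P j).mulVec x ∈ genEig A (lam j))
    (hPsum : ∀ x : Fin n → ℝ, ∑ j, (P j).mulVec x = x)
    (Y : Fin p → Fin (t + 1) → ℝ) (xtrue : Fin n → ℝ)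
    (ΛA : Finset (Fin p)) (hΛA : ΛA.card ≤ s)
    (hdata : ∀ i ∉ ΛA, Y i = obsMap t A C i xtrue)
    (hqobs : ∀ j, q + 1 ≤ {i : Fin p | eigObs A C (lam j) i}.ncard) :
    {x : Fin n → ℝ | ∃ v : Fin r → Fin n → ℝ,
        (∀ j, v j ∈ Xset t A C lam Y s q j) ∧
        (⋃ j, Iset t A C lam Y j (v j)).ncard ≤ s ∧ x = ∑ j, v j}
      = {x : Fin n → ℝ | plausible t A C s Y x} := by
  ext x
  constructor
  · rintro ⟨v, hX, hI, rfl⟩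
    rcases isEmpty_or_nonempty (Fin r) with hr | ⟨⟨j₀⟩⟩
    · -- Without eigenvalues the state space is trivial, so every state is `xtrue`.
      have hx : ∑ j, v j = xtrue := by simpa using hPsum xtrue
      rw [Set.mem_ofPred_eq, hx]
      exact plausible_of_forall_notMem (U := ΛA) (by rwa [Set.ncard_coe_finset])
        fun i hi => (hdata i hi).symm
    · refine plausible_of_forall_notMem hI fun i hi =>
        obsMap_sum_eq_of_forall_agrees ht hlam (fun j => (hX j).1) j₀ fun j => ?_
      by_contra hj
      exact hi (Set.mem_iUnion_of_mem j hj)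
  · rintro ⟨Γ, hΓ, hx⟩
    have hΓc := ncard_compl_le_of_card_eq hΓ
    have hag : ∀ i ∈ (Γ : Set (Fin p)), ∀ j, agrees t A C lam Y j ((P j).mulVec x) i :=
      fun i hi => agrees_of_obsMap_sum_eq (fun k => hPmem k x) (by rw [hPsum]; exact hx i hi)
    exact ⟨fun j => (P j).mulVec x,
      fun j => mem_Xset_of_forall_agrees (hPmem j x) (hqobs j) hΓc fun i hi => hag i hi j,
      ncard_iUnion_Iset_le hΓc hag, (hPsum x).symm⟩

/-- Proposition 1: correctness of the extended decomposition-based SSR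
algorithm under `q`-eigenvalue observability with `s ≤ q ≤ 2s`. -/
theorem extended_decomposition_ssr_correct
    {n p r s q t : ℕ} (hsp : s ≤ p) (hsq : s ≤ q) (hq2s : q ≤ 2 * s) (ht : n - 1 ≤ t)
    (A : Matrix (Fin n) (Fin n) ℝ) (C : Matrix (Fin p) (Fin n) ℝ)
    (lam : Fin r → ℝ) (hlam : Function.Injective lam)
    (heig : ∀ j, ∃ w : Fin n → ℝ, w ≠ 0 ∧ A.mulVec w = lam j • w)
    (P : Fin r → Matrix (Fin n) (Fin n) ℝ)
    (hPmem : ∀ j, ∀ x : Fin n → ℝ, (P j).mulVec x ∈ genEig A (lam j))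
    (hPsum : ∀ x : Fin n → ℝ, ∑ j, (P j).mulVec x = x)
    (Y : Fin p → Fin (t + 1) → ℝ) (xtrue : Fin n → ℝ)
    (ΛA : Finset (Fin p)) (hΛA : ΛA.card ≤ s)
    (hdata : ∀ i ∉ ΛA, Y i = obsMap t A C i xtrue)
    (hqobs : ∀ j, q + 1 ≤ {i : Fin p | eigObs A C (lam j) i}.ncard) :
    {x : Fin n → ℝ | ∃ v : Fin r → Fin n → ℝ,
        (∀ j, v j ∈ Xset t A C lam Y s q j) ∧
        (⋃ j, Iset t A C lam Y j (v j)).ncard ≤ s ∧ x = ∑ j, v j}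
      = {x : Fin n → ℝ | plausible t A C s Y x} :=
  extended_decomposition_ssr_correct_general ht A C lam hlam P hPmem hPsum Y xtrue ΛA hΛA hdata
    hqobs
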